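/- arXiv:nlin/0506024 — 6 statements merged into one kernel-verified Lean document; each statement's English description precedes it below -/
import Mathlib

section
/- Let V be a finite-dimensional real vector space and ω : V × V → ℝ an alternating nondegenerate bilinear form. Let G be a compact subgroup of the group of linear automorphisms of V (with its standard topology) such that ω(g v, g w) = ω(v, w) for every g ∈ G and all v, w ∈ V. Then the fixed-point subspace Fix G = { v ∈ V | g v = v for all g ∈ G } is a symplectic subspace of V, i.e. the restriction of ω to Fix G × Fix G is nondegenerate. -/
open MeasureTheory TopologicalSpace

/-- **Fixed-point sets of compact symplectic groups are symplectic.**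
Let `V` be a finite-dimensional real vector space (given its standard topology, here via a
norm) and `ω` an alternating nondegenerate bilinear form on `V`.  Let `G` be a compact
subgroup of the group of linear automorphisms of `V` (realized as the units of the algebra
of continuous linear endomorphisms) whose elements preserve `ω`.  Then the restriction of
`ω` to the fixed-point subspace `Fix G` is nondegenerate. -/
theorem fix_of_compact_symplectic_group_is_symplectic
    (V : Type*) [NormedAddCommGroup V] [NormedSpace ℝ V] [FiniteDimensional ℝ V]
    (ω : V →ₗ[ℝ] V →ₗ[ℝ] ℝ)
    (halt : ∀ v : V, ω v v = 0)
    (hnondeg : ∀ v : V, (∀ w : V, ω v w = 0) → v = 0)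
    (G : Subgroup (V →L[ℝ] V)ˣ)
    (hcompact : IsCompact (G : Set (V →L[ℝ] V)ˣ))
    (hsymp : ∀ g ∈ G, ∀ v w : V, ω ((g : V →L[ℝ] V) v) ((g : V →L[ℝ] V) w) = ω v w) :
    ∀ v ∈ {v : V | ∀ g ∈ G, (g : V →L[ℝ] V) v = v},
      (∀ w ∈ {v : V | ∀ g ∈ G, (g : V →L[ℝ] V) v = v}, ω v w = 0) → v = 0 := by
  intro v hv hw
  haveI : CompactSpace ↥G := isCompact_iff_compactSpace.mp hcompact
  haveI : Nonempty ↥G := ⟨1⟩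
  letI : MeasurableSpace ↥G := borel ↥G
  haveI : BorelSpace ↥G := ⟨rfl⟩
  apply hnondeg
  intro w
  set μ : Measure ↥G := Measure.haarMeasure (⊤ : PositiveCompacts ↥G) with hμ
  haveI : IsProbabilityMeasure μ := by
    constructor
    rw [← PositiveCompacts.coe_top (α := ↥G)]
    exact Measure.haarMeasure_self
  -- the averaged vector
  set f : ↥G → V := fun g => ((g : (V →L[ℝ] V)ˣ) : V →L[ℝ] V) w with hf
  have hcont : Continuous f := by
    exact (ContinuousLinearMap.apply ℝ V w).continuous.comp
      (Units.continuous_val.comp continuous_subtype_val)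
  have hint : Integrable f μ := by
    apply hcont.integrable_of_hasCompactSupport
    exact IsCompact.of_isClosed_subset isCompact_univ (isClosed_tsupport _) (Set.subset_univ _)
  set Pw : V := ∫ g, f g ∂μ with hPw
  -- `Pw` is a fixed point
  have hfix : Pw ∈ {v : V | ∀ g ∈ G, (g : V →L[ℝ] V) v = v} := by
    intro g₀ hg₀
    have h1 : (g₀ : V →L[ℝ] V) Pw = ∫ g, (g₀ : V →L[ℝ] V) (f g) ∂μ :=
      (ContinuousLinearMap.integral_comp_comm _ hint).symm
    have h2 : ∀ g : ↥G, (g₀ : V →L[ℝ] V) (f g) = f ((⟨g₀, hg₀⟩ : ↥G) * g) := by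
      intro g
      simp [hf, Units.val_mul, ContinuousLinearMap.mul_apply]
    rw [h1]
    simp_rw [h2]
    exact integral_mul_left_eq_self f (⟨g₀, hg₀⟩ : ↥G)
  -- pairing with `v` of the average equals pairing with `w`
  have hpair : ω v Pw = ω v w := by
    have h1 : ω v Pw = ∫ g, ω v (f g) ∂μ := by
      have := (LinearMap.toContinuousLinearMap (ω v)).integral_comp_comm hint
      simpa using this.symm
    have h2 : ∀ g : ↥G, ω v (f g) = ω v w := by
      intro g
      have hgv : ((g : (V →L[ℝ] V)ˣ) : V →L[ℝ] V) v = v := hv _ g.2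
      calc ω v (f g) = ω (((g : (V →L[ℝ] V)ˣ) : V →L[ℝ] V) v)
            (((g : (V →L[ℝ] V)ˣ) : V →L[ℝ] V) w) := by rw [hgv]
        _ = ω v w := hsymp _ g.2 v w
    rw [h1]
    simp_rw [h2]
    simp
  have := hw Pw hfix
  rw [hpair] at this
  exact this
end

section
/- For all nonzero complex numbers x, y and z: x − 1/x + y − 1/y + z − 1/z − xyz + 1/(xyz) = (1 − xy)(1 − xz)(1 − yz)/(xyz). Consequently, if x, y and z lie on the complex unit circle, the left-hand side vanishes if and only if xy = 1, xz = 1 or yz = 1. -/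
/-- With `x = e^{iα}` one has `x - 1 / x = 2i sin α`, so on the unit circle this is
`2i (sin α + sin β + sin γ - sin (α + β + γ))`. -/
def beukersSum {K : Type*} [DivisionRing K] (x y z : K) : K :=
  x - 1 / x + y - 1 / y + z - 1 / z - x * y * z + 1 / (x * y * z)

section Field

variable {K : Type*} [Field K] {x y z : K}

theorem beukersSum_eq_div (hx : x ≠ 0) (hy : y ≠ 0) (hz : z ≠ 0) :
    beukersSum x y z = (1 - x * y) * (1 - x * z) * (1 - y * z) / (x * y * z) := by
  unfold beukersSum
  field_simp
  ring

theorem beukersSum_eq_zero_iff (hx : x ≠ 0) (hy : y ≠ 0) (hz : z ≠ 0) :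
    beukersSum x y z = 0 ↔ x * y = 1 ∨ x * z = 1 ∨ y * z = 1 := by
  rw [beukersSum_eq_div hx hy hz, div_eq_zero_iff, or_iff_left (by positivity)]
  simp only [mul_eq_zero, sub_eq_zero, eq_comm (a := (1 : K)), or_assoc]

end Field

/-- **Beukers' quartic trick.**  For nonzero complex `x, y, z`:
`x − 1/x + y − 1/y + z − 1/z − xyz + 1/(xyz) = (1 − xy)(1 − xz)(1 − yz)/(xyz)`;
consequently, on the unit circle the left-hand side vanishes iff `xy = 1`, `xz = 1` or
`yz = 1`. -/
theorem beukers_quartic_identity :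
    (∀ x y z : ℂ, x ≠ 0 → y ≠ 0 → z ≠ 0 →
      x - 1 / x + y - 1 / y + z - 1 / z - x * y * z + 1 / (x * y * z) =
        (1 - x * y) * (1 - x * z) * (1 - y * z) / (x * y * z)) ∧
    (∀ x y z : ℂ, ‖x‖ = 1 → ‖y‖ = 1 → ‖z‖ = 1 →
      (x - 1 / x + y - 1 / y + z - 1 / z - x * y * z + 1 / (x * y * z) = 0 ↔
        x * y = 1 ∨ x * z = 1 ∨ y * z = 1)) := by
  have ne_zero_of_norm_eq_one {w : ℂ} (hw : ‖w‖ = 1) : w ≠ 0 :=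
    norm_ne_zero_iff.mp (hw ▸ one_ne_zero)
  exact ⟨fun x y z => beukersSum_eq_div, fun x y z hx hy hz =>
    beukersSum_eq_zero_iff (ne_zero_of_norm_eq_one hx) (ne_zero_of_norm_eq_one hy)
      (ne_zero_of_norm_eq_one hz)⟩
end

section
/- For all real numbers α, β and γ: sin α + sin β + sin γ = sin(α + β + γ) if and only if α + β ∈ 2πℤ, or α + γ ∈ 2πℤ, or β + γ ∈ 2πℤ. -/
open Real

theorem sin_half_eq_zero_iff (x : ℝ) :
    sin (x / 2) = 0 ↔ ∃ k : ℤ, x = 2 * π * k := by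
  rw [Real.sin_eq_zero_iff]
  constructor
  · rintro ⟨n, hn⟩; exact ⟨n, by linear_combination (-2 : ℝ) * hn⟩
  · rintro ⟨k, hk⟩; exact ⟨k, by linear_combination (-1/2 : ℝ) * hk⟩

theorem sin_triple_factor (α β γ : ℝ) :
    sin α + sin β + sin γ - sin (α + β + γ) =
      4 * sin ((α + β) / 2) * sin ((α + γ) / 2) * sin ((β + γ) / 2) := by
  have h1 := Real.sin_sub_sin α (-β)
  have h2 := Real.sin_sub_sin γ (α + β + γ)
  have h3 := Real.cos_sub_cos ((α - β) / 2) ((γ + (α + β + γ)) / 2)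
  have ho : sin ((γ - (α + β + γ)) / 2) = -sin ((α + β) / 2) := by
    rw [show (γ - (α + β + γ)) / 2 = -((α + β) / 2) from by ring, Real.sin_neg]
  rw [show ((α - β) / 2 + (γ + (α + β + γ)) / 2) / 2 = (α + γ) / 2 from by ring,
    show ((α - β) / 2 - (γ + (α + β + γ)) / 2) / 2 = -((β + γ) / 2) from by ring,
    Real.sin_neg] at h3
  rw [show (α - -β) / 2 = (α + β) / 2 from by ring,
    show (α + -β) / 2 = (α - β) / 2 from by ring, Real.sin_neg] at h1
  rw [ho] at h2
  have hc : cos ((γ + (α + β + γ)) / 2)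
      = cos ((α - β) / 2) - (-2 * sin ((α + γ) / 2) * -sin ((β + γ) / 2)) := by
    rw [← h3]; ring
  rw [show sin α + sin β + sin γ - sin (α + β + γ)
      = (sin α - -sin β) + (sin γ - sin (α + β + γ)) from by ring, h1, h2, hc]
  ring

/-- **Quartic resonance classification.**  For real `α, β, γ`:
`sin α + sin β + sin γ = sin(α + β + γ)` iff `α + β ∈ 2πℤ`, `α + γ ∈ 2πℤ` or
`β + γ ∈ 2πℤ`. -/
theorem sin_add_add_eq_sin_sum_iff (α β γ : ℝ) :
    sin α + sin β + sin γ = sin (α + β + γ) ↔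
      (∃ k : ℤ, α + β = 2 * π * k) ∨ (∃ k : ℤ, α + γ = 2 * π * k) ∨
        (∃ k : ℤ, β + γ = 2 * π * k) := by
  rw [← sub_eq_zero, sin_triple_factor, ← sin_half_eq_zero_iff (α + β),
    ← sin_half_eq_zero_iff (α + γ), ← sin_half_eq_zero_iff (β + γ)]
  constructor
  · intro h
    rcases mul_eq_zero.mp h with h' | h3
    · rcases mul_eq_zero.mp h' with h'' | h2
      · rcases mul_eq_zero.mp h'' with h4 | h1
        · norm_num at h4
        · exact Or.inl h1
      · exact Or.inr (Or.inl h2)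
    · exact Or.inr (Or.inr h3)
  · rintro (h | h | h) <;> rw [h] <;> ring
end

section
/- Let N = 2n+2 with n ≥ 1, and let ω_k = 2 sin(kπ/N). There exist no multi-indices Θ, θ : {1, …, N−1} → ℤ_{≥0} such that Σ_{k=1}^{N−1}(Θ_k + θ_k) = 3, μ(Θ, θ) ≡ 0 (mod N), and ν(Θ, θ) = 0. -/
open Finset Real

/-- The eigenvalue datum `ν(Θ, θ) = Σ_{k=1}^{N/2−1} ω_k (θ_k − θ_{N−k} − Θ_k + Θ_{N−k})
+ ω_{N/2}(θ_{N/2} − Θ_{N/2})` for the periodic FPU lattice with `N = 2n+2` particles,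
where `ω_k = 2 sin(kπ/N)`.  (So `i·ν(Θ,θ)` are the eigenvalues of `ad_{H₂}` on the
monomials `z^Θ ζ^θ`.) -/
noncomputable def fpuNu (n : ℕ) (Θ θ : ℕ → ℕ) : ℝ :=
  (∑ k ∈ Finset.Icc 1 n, 2 * Real.sin (k * π / (2 * n + 2)) *
      ((θ k : ℝ) - θ (2 * n + 2 - k) - Θ k + Θ (2 * n + 2 - k))) +
    2 * Real.sin ((n + 1) * π / (2 * n + 2)) * ((θ (n + 1) : ℝ) - Θ (n + 1))

/-- The eigenvalue datum `μ(Θ, θ) = Σ_{k=1}^{N/2−1} k (Θ_k + Θ_{N−k} − θ_k − θ_{N−k})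
+ (N/2)(Θ_{N/2} − θ_{N/2})`, regarded modulo `N`, for the periodic FPU lattice with
`N = 2n+2` particles.  (So `e^{2πiμ(Θ,θ)/N}` are the eigenvalues of pullback by the
cyclic symmetry `R` on the monomials `z^Θ ζ^θ`.) -/
def fpuMu (n : ℕ) (Θ θ : ℕ → ℕ) : ℤ :=
  (∑ k ∈ Finset.Icc 1 n, (k : ℤ) *
      ((Θ k : ℤ) + Θ (2 * n + 2 - k) - θ k - θ (2 * n + 2 - k))) +
    (n + 1 : ℤ) * ((Θ (n + 1) : ℤ) - θ (n + 1))

/-!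
Each mode `z_j` or `ζ_j` (`1 ≤ j ≤ N - 1`) carries the weights `μ = ±a` and `ν = ±ω_a` with
`a = min j (N - j) ∈ [1, N/2]`, the two signs being independent; a cubic monomial is a sum of
three such weights. Since the `ω_a` are positive, `ν = 0` forces `ω_c = ω_a + ω_b` for some
arrangement of the three, and strict concavity of `sin` on `[0, π/2]` then gives `c > a + b`.
But then `0 < |μ| < 2c ≤ N`, so `N ∤ μ`.
-/

theorem Real.sin_lt_sin_add_sin {x y z : ℝ} (hx : 0 < x) (hx' : x ≤ π / 2) (hy : 0 < y)
    (hy' : y ≤ π / 2) (hz : -(π / 2) ≤ z) (hzxy : z ≤ x + y) : sin z < sin x + sin y := by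
  have hsx : 0 < sin x := sin_pos_of_pos_of_lt_pi hx (by linarith [pi_pos])
  have hsy : 0 < sin y := sin_pos_of_pos_of_lt_pi hy (by linarith [pi_pos])
  rcases le_or_gt (x + y) (π / 2) with hxy | hxy
  · have hcx : cos x < 1 := by
      simpa using cos_lt_cos_of_nonneg_of_le_pi le_rfl (by linarith [pi_pos]) hx
    calc sin z ≤ sin (x + y) := sin_le_sin_of_le_of_le_pi_div_two hz hxy hzxy
      _ = sin x * cos y + cos x * sin y := sin_add x y
      _ < sin x + sin y := by nlinarith [cos_le_one y]
  · have hcx : cos x < sin y := by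
      rw [← sin_pi_div_two_sub]
      exact sin_lt_sin_of_lt_of_le_pi_div_two (by linarith) hy' (by linarith)
    have hcx₀ : 0 ≤ cos x := cos_nonneg_of_mem_Icc ⟨by linarith, hx'⟩
    nlinarith [sin_sq_add_cos_sq x, sin_le_one x, cos_le_one x, sin_le_one z]

theorem abs_eq_abs_add_abs_of_add_add_eq_zero {α : Type*} [Field α] [LinearOrder α]
    [IsStrictOrderedRing α] {a b c : α} (h : a + b + c = 0) :
    |a| = |b| + |c| ∨ |b| = |a| + |c| ∨ |c| = |a| + |b| := by
  rcases abs_cases a with ⟨ha, ha'⟩ | ⟨ha, ha'⟩ <;>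
    rcases abs_cases b with ⟨hb, hb'⟩ | ⟨hb, hb'⟩ <;>
    rcases abs_cases c with ⟨hc, hc'⟩ | ⟨hc, hc'⟩ <;> rw [ha, hb, hc] <;> first
    | (left; linarith) | (right; left; linarith) | (right; right; linarith)

theorem Int.not_dvd_add_add_of_natAbs_add_lt {N : ℕ} {a b c : ℤ}
    (habc : a.natAbs + b.natAbs < c.natAbs) (hc : 2 * c.natAbs ≤ N) : ¬ (N : ℤ) ∣ a + b + c :=
  fun hdvd ↦ by have := Int.eq_zero_of_dvd_of_natAbs_lt_natAbs hdvd (by omega); omega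

theorem Finset.exists_sum_nsmul_eq_add_add {ι : Type*} {s : Finset ι} {f : ι → ℕ}
    (h : ∑ j ∈ s, f j = 3) : ∃ i ∈ s, ∃ j ∈ s, ∃ k ∈ s,
      ∀ {M : Type*} [AddCommMonoid M] (w : ι → M), ∑ x ∈ s, f x • w x = w i + w j + w k := by
  set m := s.val.bind fun j ↦ Multiset.replicate (f j) j
  have hcard : Multiset.card m = 3 := by simpa [m, Multiset.card_bind, Function.comp_def] using h
  have hmem : ∀ x ∈ m, x ∈ s := fun x hx ↦ by
    obtain ⟨j, hj, hx⟩ := Multiset.mem_bind.mp hx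
    rwa [Multiset.eq_of_mem_replicate hx]
  obtain ⟨i, j, k, hm⟩ := Multiset.card_eq_three.mp hcard
  refine ⟨i, hmem i (by simp [hm]), j, hmem j (by simp [hm]), k, hmem k (by simp [hm]), ?_⟩
  intro M _ w
  have hsum : (m.map w).sum = ∑ x ∈ s, f x • w x := by
    simp only [m, Multiset.map_bind, Multiset.sum_bind, Multiset.map_replicate,
      Multiset.sum_replicate]
    rfl
  rw [← hsum, hm]
  simp [add_assoc]

theorem Finset.sum_Icc_eq_sum_pairs_add_middle {M : Type*} [AddCommMonoid M] (n : ℕ)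
    (c : ℕ → M) :
    ∑ k ∈ Icc 1 (2 * n + 1), c k = ∑ k ∈ Icc 1 n, (c k + c (2 * n + 2 - k)) + c (n + 1) := by
  have hupper : ∑ k ∈ Ioc (n + 1) (2 * n + 1), c k = ∑ k ∈ Ioc 0 n, c (2 * n + 2 - k) := by
    apply Finset.sum_nbij' (fun k ↦ 2 * n + 2 - k) (fun k ↦ 2 * n + 2 - k) <;>
      intro k hk <;> simp only [mem_Ioc] at hk ⊢ <;>
      first | omega | (congr 1; omega)
  have hIcc : ∀ m, Icc 1 m = Ioc 0 m := Finset.Icc_add_one_left_eq_Ioc 0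
  rw [hIcc, hIcc,
    ← Finset.sum_Ioc_consecutive c (Nat.zero_le (n + 1)) (by omega : n + 1 ≤ 2 * n + 1),
    Finset.sum_Ioc_succ_top (Nat.zero_le n), hupper, Finset.sum_add_distrib]
  abel

namespace FPU

noncomputable def freq (N a : ℕ) : ℝ := 2 * sin (a * π / N)

theorem freq_pos {N a : ℕ} (ha : 0 < a) (haN : a < N) : 0 < freq N a := by
  have hN : (0 : ℝ) < N := by exact_mod_cast ha.trans haN
  refine mul_pos two_pos (sin_pos_of_pos_of_lt_pi (by positivity) ?_)
  rw [div_lt_iff₀ hN]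
  exact mul_lt_mul_of_pos_right (by exact_mod_cast haN) pi_pos |>.trans_eq (mul_comm _ _)

theorem lt_of_freq_eq_add {N a b c : ℕ} (ha : 0 < a) (ha' : 2 * a ≤ N) (hb : 0 < b)
    (hb' : 2 * b ≤ N) (h : freq N c = freq N a + freq N b) : a + b < c := by
  by_contra! hc
  have hN : (0 : ℝ) < N := by exact_mod_cast (by omega : 0 < N)
  have angle_le : ∀ {k : ℕ}, 2 * k ≤ N → k * π / N ≤ π / 2 := fun {k} hk ↦ by
    rw [div_le_div_iff₀ hN two_pos]
    nlinarith [mul_le_mul_of_nonneg_right (by exact_mod_cast hk : (2 * k : ℝ) ≤ N) pi_pos.le]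
  have := sin_lt_sin_add_sin (x := a * π / N) (y := b * π / N) (z := c * π / N) (by positivity)
    (angle_le ha') (by positivity) (angle_le hb')
    (by linarith [pi_pos, (by positivity : 0 ≤ c * π / N)])
    (by rw [← add_div, ← add_mul]; gcongr; exact_mod_cast hc)
  unfold freq at h
  linarith

def IsModeWeight (N : ℕ) (m : ℤ) (w : ℝ) : Prop :=
  0 < m.natAbs ∧ 2 * m.natAbs ≤ N ∧ |w| = freq N m.natAbs

theorem not_dvd_of_abs_eq_add {N : ℕ} {m₁ m₂ m₃ : ℤ} {w₁ w₂ w₃ : ℝ}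
    (h₁ : IsModeWeight N m₁ w₁) (h₂ : IsModeWeight N m₂ w₂) (h₃ : IsModeWeight N m₃ w₃)
    (hw : |w₃| = |w₁| + |w₂|) : ¬ (N : ℤ) ∣ m₁ + m₂ + m₃ := by
  obtain ⟨h₁, h₁', hw₁⟩ := h₁
  obtain ⟨h₂, h₂', hw₂⟩ := h₂
  obtain ⟨-, h₃', hw₃⟩ := h₃
  rw [hw₁, hw₂, hw₃] at hw
  exact Int.not_dvd_add_add_of_natAbs_add_lt (lt_of_freq_eq_add h₁ h₁' h₂ h₂' hw) h₃'

theorem not_resonant {N : ℕ} {m₁ m₂ m₃ : ℤ} {w₁ w₂ w₃ : ℝ}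
    (h₁ : IsModeWeight N m₁ w₁) (h₂ : IsModeWeight N m₂ w₂) (h₃ : IsModeWeight N m₃ w₃) :
    ¬ ((N : ℤ) ∣ m₁ + m₂ + m₃ ∧ w₁ + w₂ + w₃ = 0) := by
  rintro ⟨hμ, hν⟩
  rcases abs_eq_abs_add_abs_of_add_add_eq_zero hν with hw | hw | hw
  · exact not_dvd_of_abs_eq_add h₂ h₃ h₁ hw (by convert hμ using 1; ring)
  · exact not_dvd_of_abs_eq_add h₁ h₃ h₂ hw (by convert hμ using 1; ring)
  · exact not_dvd_of_abs_eq_add h₁ h₂ h₃ hw hμ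

def fold (N j : ℕ) : ℕ := min j (N - j)

theorem fold_of_two_mul_le {N j : ℕ} (h : 2 * j ≤ N) : fold N j = j := by
  unfold fold; omega

theorem fold_sub_of_two_mul_le {N j : ℕ} (h : 2 * j ≤ N) : fold N (N - j) = j := by
  unfold fold; omega

section Lattice

variable (n : ℕ)

noncomputable def nuCoeff (j : ℕ) : ℝ :=
  if j ≤ n + 1 then -freq (2 * n + 2) (fold (2 * n + 2) j)
  else freq (2 * n + 2) (fold (2 * n + 2) j)

/-- `Sum.inl j` stands for the mode `z_j` and `Sum.inr j` for `ζ_j`. -/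
def modeMu : ℕ ⊕ ℕ → ℤ :=
  Sum.elim (fun j ↦ fold (2 * n + 2) j) (fun j ↦ -fold (2 * n + 2) j)

noncomputable def modeNu : ℕ ⊕ ℕ → ℝ :=
  Sum.elim (nuCoeff n) (fun j ↦ -nuCoeff n j)

theorem isModeWeight_modeMu_modeNu {x : ℕ ⊕ ℕ}
    (hx : x ∈ (Icc 1 (2 * n + 1)).disjSum (Icc 1 (2 * n + 1))) :
    IsModeWeight (2 * n + 2) (modeMu n x) (modeNu n x) := by
  have key : ∀ j ∈ Icc 1 (2 * n + 1),
      IsModeWeight (2 * n + 2) (fold (2 * n + 2) j) (nuCoeff n j) := by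
    intro j hj
    rw [mem_Icc] at hj
    have hfold : 0 < fold (2 * n + 2) j ∧ 2 * fold (2 * n + 2) j ≤ 2 * n + 2 := by
      unfold fold; omega
    refine ⟨by simpa using hfold.1, by simpa using hfold.2, ?_⟩
    have hpos := freq_pos hfold.1 (by omega : fold (2 * n + 2) j < 2 * n + 2)
    unfold nuCoeff
    split_ifs <;> simp [abs_of_pos hpos]
  cases x with
  | inl j => exact key j (by simpa using hx)
  | inr j => simpa [IsModeWeight, modeMu, modeNu] using key j (by simpa using hx)

theorem fpuMu_eq_sum (Θ θ : ℕ → ℕ) :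
    fpuMu n Θ θ = ∑ x ∈ (Icc 1 (2 * n + 1)).disjSum (Icc 1 (2 * n + 1)),
      Sum.elim Θ θ x • modeMu n x := by
  rw [sum_disjSum, ← sum_add_distrib, sum_Icc_eq_sum_pairs_add_middle, fpuMu]
  simp only [modeMu, Sum.elim_inl, Sum.elim_inr, nsmul_eq_mul]
  congr 1
  · refine sum_congr rfl fun k hk ↦ ?_
    rw [mem_Icc] at hk
    rw [fold_of_two_mul_le (by omega), fold_sub_of_two_mul_le (by omega)]
    ring
  · rw [fold_of_two_mul_le (by omega)]
    push_cast
    ring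

theorem fpuNu_eq_sum (Θ θ : ℕ → ℕ) :
    fpuNu n Θ θ = ∑ x ∈ (Icc 1 (2 * n + 1)).disjSum (Icc 1 (2 * n + 1)),
      Sum.elim Θ θ x • modeNu n x := by
  rw [sum_disjSum, ← sum_add_distrib, sum_Icc_eq_sum_pairs_add_middle, fpuNu]
  simp only [modeNu, nuCoeff, Sum.elim_inl, Sum.elim_inr, nsmul_eq_mul]
  congr 1
  · refine sum_congr rfl fun k hk ↦ ?_
    rw [mem_Icc] at hk
    rw [if_pos (by omega), if_neg (by omega), fold_of_two_mul_le (by omega),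
      fold_sub_of_two_mul_le (by omega), freq]
    push_cast
    ring
  · rw [if_pos le_rfl, fold_of_two_mul_le (by omega), freq]
    push_cast
    ring

end Lattice

end FPU

open FPU in
theorem no_cubic_symmetric_resonances_general (n : ℕ) :
    ¬ ∃ Θ θ : ℕ → ℕ,
      (∑ k ∈ Finset.Icc 1 (2 * n + 1), (Θ k + θ k)) = 3 ∧
      ((2 * n + 2 : ℤ) ∣ fpuMu n Θ θ) ∧
      fpuNu n Θ θ = 0 := by
  rintro ⟨Θ, θ, hdeg, hμ, hν⟩
  obtain ⟨x, hx, y, hy, z, hz, hsum⟩ :=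
    exists_sum_nsmul_eq_add_add (s := (Icc 1 (2 * n + 1)).disjSum (Icc 1 (2 * n + 1)))
      (f := Sum.elim Θ θ) (by rwa [sum_disjSum, ← sum_add_distrib])
  rw [fpuMu_eq_sum, hsum] at hμ
  rw [fpuNu_eq_sum, hsum] at hν
  exact not_resonant (isModeWeight_modeMu_modeNu n hx) (isModeWeight_modeMu_modeNu n hy)
    (isModeWeight_modeMu_modeNu n hz) ⟨by exact_mod_cast hμ, hν⟩

/-- **No cubic terms in the symmetric resonant normal form.**  There are no multi-indices
`Θ, θ` of total degree `3` with `μ(Θ, θ) ≡ 0 (mod N)` and `ν(Θ, θ) = 0`. -/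
theorem no_cubic_symmetric_resonances (n : ℕ) (hn : 1 ≤ n) :
    ¬ ∃ Θ θ : ℕ → ℕ,
      (∑ k ∈ Finset.Icc 1 (2 * n + 1), (Θ k + θ k)) = 3 ∧
      ((2 * n + 2 : ℤ) ∣ fpuMu n Θ θ) ∧
      fpuNu n Θ θ = 0 :=
  no_cubic_symmetric_resonances_general n
end

section
/- The following three resonance relations among sines hold: sin(π/6) + sin(3π/14) − sin(π/14) − sin(5π/14) = 0; sin(π/6) + sin(13π/30) − sin(7π/30) − sin(3π/10) = 0; sin(π/2) + sin(π/10) − sin(π/6) − sin(3π/10) = 0. -/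
open Real

lemma cos_two_pi_div_five' : Real.cos (2 * π / 5) = (Real.sqrt 5 - 1) / 4 := by
  have h : Real.cos (2 * π / 5) = 2 * Real.cos (π / 5) ^ 2 - 1 := by
    rw [show (2 * π / 5 : ℝ) = 2 * (π / 5) by ring, Real.cos_two_mul]
  have h5 : Real.sqrt 5 ^ 2 = 5 := Real.sq_sqrt (by norm_num)
  rw [h, Real.cos_pi_div_five]
  nlinarith [h5]

lemma seven_relation : 1 / 2 + Real.cos (2 * (π / 7)) - Real.cos (3 * (π / 7))
    - Real.cos (π / 7) = 0 := by
  set x : ℝ := π / 7 with hx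
  have e1 : Real.sin (3 * x) - Real.sin x = 2 * Real.sin x * Real.cos (2 * x) := by
    have := Real.sin_sub_sin (3 * x) x
    rw [show (3 * x - x) / 2 = x by ring, show (3 * x + x) / 2 = 2 * x by ring] at this
    linarith
  have e2 : Real.sin (4 * x) - Real.sin (2 * x) = 2 * Real.sin x * Real.cos (3 * x) := by
    have := Real.sin_sub_sin (4 * x) (2 * x)
    rw [show (4 * x - 2 * x) / 2 = x by ring, show (4 * x + 2 * x) / 2 = 3 * x by ring] at this
    linarith
  have e3 : Real.sin (2 * x) = 2 * Real.sin x * Real.cos x := Real.sin_two_mul x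
  have e4 : Real.sin (4 * x) = Real.sin (3 * x) := by
    rw [show (4 : ℝ) * x = π - 3 * x by rw [hx]; ring, Real.sin_pi_sub]
  have hs : 0 < Real.sin x := Real.sin_pos_of_pos_of_lt_pi
    (by rw [hx]; positivity) (by rw [hx]; nlinarith [Real.pi_pos])
  have key : 2 * Real.sin x * (1 / 2 + Real.cos (2 * x) - Real.cos (3 * x) - Real.cos x) = 0 := by
    linear_combination -e1 + e2 + e3 - e4
  have h2 : (2 : ℝ) * Real.sin x ≠ 0 := by positivity
  exact (mul_eq_zero.mp key).resolve_left h2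

/-- **Explicit fourth-order resonance relations among FPU frequencies.**
`sin(π/6) + sin(3π/14) − sin(π/14) − sin(5π/14) = 0`,
`sin(π/6) + sin(13π/30) − sin(7π/30) − sin(3π/10) = 0`, and
`sin(π/2) + sin(π/10) − sin(π/6) − sin(3π/10) = 0`. -/
theorem fpu_explicit_resonance_relations :
    sin (π / 6) + sin (3 * π / 14) - sin (π / 14) - sin (5 * π / 14) = 0 ∧
    sin (π / 6) + sin (13 * π / 30) - sin (7 * π / 30) - sin (3 * π / 10) = 0 ∧
    sin (π / 2) + sin (π / 10) - sin (π / 6) - sin (3 * π / 10) = 0 := by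
  have hpi6 : Real.sin (π / 6) = 1 / 2 := Real.sin_pi_div_six
  refine ⟨?_, ?_, ?_⟩
  · rw [show (3 * π / 14 : ℝ) = π / 2 - 2 * (π / 7) by ring,
      show (π / 14 : ℝ) = π / 2 - 3 * (π / 7) by ring,
      show (5 * π / 14 : ℝ) = π / 2 - π / 7 by ring,
      Real.sin_pi_div_two_sub, Real.sin_pi_div_two_sub, Real.sin_pi_div_two_sub, hpi6]
    linarith [seven_relation]
  · rw [show (13 * π / 30 : ℝ) = π / 2 - π / 15 by ring,
      show (7 * π / 30 : ℝ) = π / 2 - 4 * π / 15 by ring,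
      show (3 * π / 10 : ℝ) = π / 2 - π / 5 by ring,
      Real.sin_pi_div_two_sub, Real.sin_pi_div_two_sub, Real.sin_pi_div_two_sub, hpi6]
    have hd : Real.cos (π / 15) - Real.cos (4 * π / 15) = Real.sin (π / 10) := by
      have := Real.cos_sub_cos (π / 15) (4 * π / 15)
      rw [show (π / 15 + 4 * π / 15) / 2 = π / 6 by ring,
        show (π / 15 - 4 * π / 15) / 2 = -(π / 10) by ring, Real.sin_neg, Real.sin_pi_div_six]
        at this
      linarith
    have hsin10 : Real.sin (π / 10) = Real.cos (2 * π / 5) := by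
      rw [show (π / 10 : ℝ) = π / 2 - 2 * π / 5 by ring, Real.sin_pi_div_two_sub]
    rw [Real.cos_pi_div_five] at *
    rw [hsin10, cos_two_pi_div_five'] at hd
    linarith
  · rw [Real.sin_pi_div_two, hpi6,
      show (π / 10 : ℝ) = π / 2 - 2 * π / 5 by ring,
      show (3 * π / 10 : ℝ) = π / 2 - π / 5 by ring,
      Real.sin_pi_div_two_sub, Real.sin_pi_div_two_sub,
      cos_two_pi_div_five', Real.cos_pi_div_five]
    ring
end

section
/- Let n ≥ 1 and set Ω_k = 2 sin(kπ/(2n+2)) for 1 ≤ k ≤ n. The symmetric n×n matrix A with entries A_{kl} = Ω_k Ω_l / 4 for k ≠ l and A_{kk} = 3 Ω_k² / 16 is invertible, i.e. det A ≠ 0. -/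
open Real Matrix

/-- **Kolmogorov nondegeneracy of the fixed-endpoint β-lattice normal form.**
With `Ω_k = 2 sin(kπ/(2n+2))`, `1 ≤ k ≤ n`, the symmetric `n×n` matrix with entries
`A_{kl} = Ω_k Ω_l / 4` for `k ≠ l` and `A_{kk} = 3Ω_k²/16` is invertible. -/
theorem fpu_normal_form_hessian_nondegenerate (n : ℕ) (hn : 1 ≤ n) :
    (Matrix.of fun k l : Fin n =>
        if k = l then
          3 * (2 * Real.sin (((k : ℕ) + 1) * π / (2 * n + 2))) ^ 2 / 16
        else
          (2 * Real.sin (((k : ℕ) + 1) * π / (2 * n + 2))) *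
            (2 * Real.sin (((l : ℕ) + 1) * π / (2 * n + 2))) / 4).det ≠ 0 := by
  set ω : Fin n → ℝ := fun k => 2 * Real.sin (((k : ℕ) + 1) * π / (2 * n + 2)) with hω
  have hωpos : ∀ k, 0 < ω k := by
    intro k
    have h1 : 0 < (((k : ℕ) + 1) : ℝ) * π / (2 * n + 2) := by
      apply div_pos (by positivity) (by positivity)
    have h2 : (((k : ℕ) + 1) : ℝ) * π / (2 * n + 2) < π := by
      rw [div_lt_iff₀ (by positivity)]
      have : (((k : ℕ) + 1) : ℝ) < 2 * n + 2 := by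
        have := k.isLt
        have : ((k:ℕ):ℝ) < n := by exact_mod_cast this
        linarith
      nlinarith [Real.pi_pos]
    have := Real.sin_pos_of_pos_of_lt_pi h1 h2
    simp only [hω]; linarith
  set C : Matrix (Fin n) (Fin n) ℝ := Matrix.of (fun k l => if k = l then (3:ℝ)/16 else 1/4) with hC
  have hfact : (Matrix.of fun k l : Fin n =>
        if k = l then
          3 * (2 * Real.sin (((k : ℕ) + 1) * π / (2 * n + 2))) ^ 2 / 16
        else
          (2 * Real.sin (((k : ℕ) + 1) * π / (2 * n + 2))) *
            (2 * Real.sin (((l : ℕ) + 1) * π / (2 * n + 2))) / 4)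
      = Matrix.diagonal ω * C * Matrix.diagonal ω := by
    ext k l
    simp only [Matrix.mul_diagonal, Matrix.diagonal_mul, Matrix.of_apply, hC, hω]
    by_cases h : k = l
    · subst h; simp; ring
    · simp [h]; ring
  have hCeq : C = (-(1/16) : ℝ) • (1 + Matrix.replicateCol Unit (fun _ => (-4:ℝ)) * Matrix.replicateRow Unit (fun _ => (1:ℝ))) := by
    ext k l
    by_cases h : k = l
    · subst h
      simp [hC, Matrix.mul_apply, Matrix.one_apply]
      norm_num
    · simp [hC, h, Matrix.mul_apply, Matrix.one_apply, Ne.symm h]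
      norm_num
  have hdetC : C.det ≠ 0 := by
    rw [hCeq, Matrix.det_smul, Matrix.det_one_add_replicateCol_mul_replicateRow]
    have : ((fun _ : Fin n => (1:ℝ)) ⬝ᵥ fun _ => (-4:ℝ)) = -4 * n := by
      simp [dotProduct, Finset.sum_const]
      ring
    rw [this]
    have h4 : (1 : ℝ) + -4 * n ≠ 0 := by
      have : (1:ℝ) ≤ n := by exact_mod_cast hn
      nlinarith
    positivity
  rw [hfact, Matrix.det_mul, Matrix.det_mul, Matrix.det_diagonal]
  have hprod : ∏ i, ω i ≠ 0 := by
    apply Finset.prod_ne_zero_iff.mpr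
    exact fun i _ => ne_of_gt (hωpos i)
  exact mul_ne_zero (mul_ne_zero hprod hdetC) hprod
end
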